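/- arXiv:1303.1643 — 4 statements merged into one kernel-verified Lean document; each statement's English description precedes it below -/
import Mathlib

section
/- A finite graph G is an interval graph if and only if G has no induced cycle of length 4 and the complement of G is a comparability graph. -/
/-- A binary matrix (rows `R`, columns `Fin n`, entries in `Bool`) has the
consecutive ones property: some permutation of the columns makes the ones in
every row consecutive. -/
def HasCOP {R : Type*} {n : ℕ} (M : R → Fin n → Bool) : Prop :=
  ∃ σ : Equiv.Perm (Fin n), ∀ (i : R) (a b c : Fin n), a ≤ b → b ≤ c →
    M i (σ a) = true → M i (σ c) = true → M i (σ b) = true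

/-- The set `S_i` of columns having a `1` in row `i`. -/
def rowSet {R : Type*} {n : ℕ} (M : R → Fin n → Bool) (i : R) : Set (Fin n) :=
  {j | M i j = true}

/-- The set `S_i` of columns having a `1` in row `i`, as a `Finset`. -/
def rowFinset {R : Type*} {n : ℕ} (M : R → Fin n → Bool) (i : R) : Finset (Fin n) :=
  Finset.univ.filter (fun j => M i j = true)

/-- `vert(c_k)`: vertices (rows) having a `1` in column `k`. -/
def vert {R : Type*} {n : ℕ} (M : R → Fin n → Bool) (k : Fin n) : Set R :=
  {i | M i k = true}

/-- The submatrix `M \ D` obtained by deleting the rows in `D`. -/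
def delRows {R : Type*} {n : ℕ} (M : R → Fin n → Bool) (D : Set R) :
    {i : R // i ∉ D} → Fin n → Bool :=
  fun i j => M i.1 j

/-- `M̃`: the `(n+m) × n` matrix obtained by stacking the `n × n` identity
matrix on top of `M`. -/
def augMatrix {m n : ℕ} (M : Fin m → Fin n → Bool) : Fin (n + m) → Fin n → Bool :=
  fun i j => Fin.addCases (fun i' : Fin n => decide (i' = j)) (fun i' : Fin m => M i' j) i

/-- The derived graph `G(M)`: one vertex per row, two distinct rows adjacent
iff some column has a `1` in both. -/
def derivedGraph {R : Type*} {n : ℕ} (M : R → Fin n → Bool) : SimpleGraph R where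
  Adj i j := i ≠ j ∧ ∃ k, M i k = true ∧ M j k = true
  symm := by
    constructor
    rintro i j ⟨hne, k, h1, h2⟩
    exact ⟨hne.symm, k, h2, h1⟩
  loopless := by constructor; rintro i ⟨h, -⟩; exact h rfl

/-- An interval graph: vertices can be assigned nonempty real intervals so
that distinct vertices are adjacent iff their intervals intersect. -/
def IsIntervalGraph {V : Type*} (G : SimpleGraph V) : Prop :=
  ∃ I : V → Set ℝ, (∀ v, (I v).Nonempty ∧ (I v).OrdConnected) ∧
    ∀ u v : V, u ≠ v → (G.Adj u v ↔ (I u ∩ I v).Nonempty)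

/-- A maximal clique: a clique not properly contained in another clique. -/
def IsMaximalClique {V : Type*} (G : SimpleGraph V) (Q : Set V) : Prop :=
  G.IsClique Q ∧ ∀ Q' : Set V, G.IsClique Q' → Q ⊆ Q' → Q' = Q

/-- A maximal clique of the induced subgraph `G[X]` (viewed as a set of
vertices of `G` contained in `X`). -/
def IsMaximalCliqueOn {V : Type*} (G : SimpleGraph V) (X Q : Set V) : Prop :=
  Q ⊆ X ∧ G.IsClique Q ∧ ∀ Q' : Set V, Q' ⊆ X → G.IsClique Q' → Q ⊆ Q' → Q' = Q

/-- `N` is the clique matrix of `G`: its columns are pairwise distinct and the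
column sets are exactly the maximal cliques of `G`. -/
def IsCliqueMatrix {V C : Type*} (G : SimpleGraph V) (N : V → C → Bool) : Prop :=
  Function.Injective (fun j : C => fun i : V => N i j) ∧
  ∀ Q : Set V, IsMaximalClique G Q ↔ ∃ j : C, Q = {i | N i j = true}

/-- An intersection cardinality preserving interval assignment: each row set
`S_i` gets an integer interval `[a i, b i]` with `|S_i ∩ S_j| = |I_i ∩ I_j|`
for all pairs `i, j`. -/
def IsICPIA {m n : ℕ} (M : Fin m → Fin n → Bool) (a b : Fin m → ℤ) : Prop :=
  ∀ i j : Fin m,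
    (rowFinset M i ∩ rowFinset M j).card =
    (Finset.Icc (a i) (b i) ∩ Finset.Icc (a j) (b j)).card

/-- `c` is an induced cycle of length `l` inside the induced subgraph `G[X]`:
`l ≥ 3` distinct vertices of `X`, cyclically consecutive ones adjacent, and
non-consecutive ones non-adjacent. -/
def IsInducedCycleOn {V : Type*} (G : SimpleGraph V) (X : Set V) (l : ℕ) (c : Fin l → V) : Prop :=
  3 ≤ l ∧ Function.Injective c ∧ (∀ i, c i ∈ X) ∧
  ∀ i j : Fin l, i ≠ j →
    (G.Adj (c i) (c j) ↔ (j.val = (i.val + 1) % l ∨ i.val = (j.val + 1) % l))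

/-- `G` has an induced cycle of length 4. -/
def HasInducedC4 {V : Type*} (G : SimpleGraph V) : Prop :=
  ∃ v1 v2 v3 v4 : V, v1 ≠ v2 ∧ v1 ≠ v3 ∧ v1 ≠ v4 ∧ v2 ≠ v3 ∧ v2 ≠ v4 ∧ v3 ≠ v4 ∧
    G.Adj v1 v2 ∧ G.Adj v2 v3 ∧ G.Adj v3 v4 ∧ G.Adj v4 v1 ∧ ¬ G.Adj v1 v3 ∧ ¬ G.Adj v2 v4

/-- A comparability graph: some partial order on the vertices makes distinct
vertices adjacent iff they are comparable. -/
def IsComparabilityGraph {V : Type*} (G : SimpleGraph V) : Prop :=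
  ∃ p : PartialOrder V, ∀ u v : V, u ≠ v → (G.Adj u v ↔ (p.le u v ∨ p.le v u))

/-! Interval graph ⇒ no induced `C₄`: two intervals that are disjoint lie one entirely to the left
of the other, and two intervals that both meet each of them meet each other. The complement of an
interval graph is ordered by "lies entirely to the left of".

Conversely, let `≤` be a partial order whose comparability graph is `Gᶜ`. An induced `C₄` of `G`
is then exactly a pair of comparable pairs `a < x`, `b < y` with all other pairs incomparable, so
without one the strict down-sets `Iio x` form a chain. Sending `x` to the interval of reals `t`
with `|Iio x| ≤ t < |Iio z|` for every `z > x` represents `G`: comparable vertices get intervals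
in the order of the vertices, and for incomparable `u`, `v` with `Iio u ⊆ Iio v` the point
`|Iio v|` lies in both intervals. -/

open Set

namespace Set.OrdConnected

variable {α : Type*} [LinearOrder α] {A B C D : Set α}

theorem forall_lt_or_forall_lt_of_disjoint (hA : A.OrdConnected) (hB : B.OrdConnected)
    (hA₀ : A.Nonempty) (hB₀ : B.Nonempty) (hAB : Disjoint A B) :
    (∀ x ∈ A, ∀ y ∈ B, x < y) ∨ (∀ y ∈ B, ∀ x ∈ A, y < x) := by
  obtain ⟨a, ha⟩ := hA₀
  obtain ⟨b, hb⟩ := hB₀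
  wlog hab : a ≤ b generalizing A B a b
  · exact (this hB hA hAB.symm b hb a ha (le_of_not_ge hab)).symm
  left
  intro x hx y hy
  by_contra! hyx
  rcases le_or_gt a y with hay | hya
  · exact hAB.notMem_of_mem_left (hA.out ha hx ⟨hay, hyx⟩) hy
  · exact hAB.notMem_of_mem_left ha (hB.out hy hb ⟨hya.le, hab⟩)

theorem inter_nonempty_of_forall_lt (hAB : ∀ x ∈ A, ∀ y ∈ B, x < y)
    (hC : C.OrdConnected) (hD : D.OrdConnected) (hCA : (C ∩ A).Nonempty)
    (hCB : (C ∩ B).Nonempty) (hDA : (D ∩ A).Nonempty) (hDB : (D ∩ B).Nonempty) :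
    (C ∩ D).Nonempty := by
  obtain ⟨p, hpC, hpA⟩ := hCA
  obtain ⟨q, hqC, hqB⟩ := hCB
  obtain ⟨r, hrD, hrA⟩ := hDA
  obtain ⟨s, hsD, hsB⟩ := hDB
  exact ⟨max p r,
    hC.out hpC hqC ⟨le_max_left _ _, max_le (hAB p hpA q hqB).le (hAB r hrA q hqB).le⟩,
    hD.out hrD hsD ⟨le_max_right _ _, max_le (hAB p hpA s hsB).le (hAB r hrA s hsB).le⟩⟩

end Set.OrdConnected

namespace IsIntervalGraph

variable {V : Type*} {G : SimpleGraph V}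

theorem not_hasInducedC4 (h : IsIntervalGraph G) : ¬ HasInducedC4 G := by
  obtain ⟨I, hI, hG⟩ := h
  rintro ⟨v₁, v₂, v₃, v₄, h₁₂, h₁₃, h₁₄, h₂₃, h₂₄, h₃₄, a₁₂, a₂₃, a₃₄, a₄₁, n₁₃, n₂₄⟩
  have d₁₃ : Disjoint (I v₁) (I v₃) :=
    Set.disjoint_iff_inter_eq_empty.2 (Set.not_nonempty_iff_eq_empty.1 (mt (hG _ _ h₁₃).2 n₁₃))
  have m₂₁ := (hG _ _ h₁₂.symm).1 a₁₂.symm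
  have m₂₃ := (hG _ _ h₂₃).1 a₂₃
  have m₄₁ := (hG _ _ h₁₄.symm).1 a₄₁
  have m₄₃ := (hG _ _ h₃₄.symm).1 a₃₄.symm
  refine n₂₄ ((hG _ _ h₂₄).2 ?_)
  rcases (hI v₁).2.forall_lt_or_forall_lt_of_disjoint (hI v₃).2 (hI v₁).1 (hI v₃).1 d₁₃
    with h | h
  · exact OrdConnected.inter_nonempty_of_forall_lt h (hI v₂).2 (hI v₄).2 m₂₁ m₂₃ m₄₁ m₄₃
  · exact OrdConnected.inter_nonempty_of_forall_lt h (hI v₂).2 (hI v₄).2 m₂₃ m₂₁ m₄₃ m₄₁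

theorem isComparabilityGraph_compl (h : IsIntervalGraph G) : IsComparabilityGraph Gᶜ := by
  obtain ⟨I, hI, hG⟩ := h
  let leftOf : V → V → Prop := fun u v => ∀ x ∈ I u, ∀ y ∈ I v, x < y
  have : IsStrictOrder V leftOf :=
    { irrefl := fun v h => let ⟨x, hx⟩ := (hI v).1; lt_irrefl x (h x hx x hx)
      trans := fun u v w huv hvw x hx z hz =>
        let ⟨y, hy⟩ := (hI v).1; (huv x hx y hy).trans (hvw y hy z hz) }
  refine ⟨partialOrderOfSO leftOf, fun u v huv => ?_⟩
  show u ≠ v ∧ ¬ G.Adj u v ↔ (u = v ∨ leftOf u v) ∨ (v = u ∨ leftOf v u)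
  rw [hG u v huv, Set.not_nonempty_iff_eq_empty, ← Set.disjoint_iff_inter_eq_empty]
  simp only [huv, Ne.symm huv, ne_eq, not_false_eq_true, true_and, false_or]
  refine ⟨(hI u).2.forall_lt_or_forall_lt_of_disjoint (hI v).2 (hI u).1 (hI v).1, ?_⟩
  rintro (h | h) <;> refine Set.disjoint_left.2 fun x hxu hxv => lt_irrefl x ?_
  exacts [h x hxu x hxv, h x hxv x hxu]

end IsIntervalGraph

theorem IsComparabilityGraph.exists_partialOrder_adj_iff_incompRel {V : Type*}
    {G : SimpleGraph V} (h : IsComparabilityGraph Gᶜ) :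
    ∃ _ : PartialOrder V, ∀ u v, G.Adj u v ↔ IncompRel (· ≤ ·) u v := by
  obtain ⟨p, hp⟩ := h
  refine ⟨p, fun u v => ?_⟩
  by_cases huv : u = v
  · subst huv
    simp [IncompRel]
  · have := hp u v huv
    rw [SimpleGraph.compl_adj] at this
    unfold IncompRel
    tauto

section IntervalOrder

variable {V : Type*} [PartialOrder V] {G : SimpleGraph V}

theorem Iio_subset_Iio_total (hG : ∀ u v, G.Adj u v ↔ IncompRel (· ≤ ·) u v)
    (hC4 : ¬ HasInducedC4 G) (x y : V) : Iio x ⊆ Iio y ∨ Iio y ⊆ Iio x := by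
  by_contra! h
  obtain ⟨⟨a, hax, hay⟩, ⟨b, hby, hbx⟩⟩ := And.imp Set.not_subset.1 Set.not_subset.1 h
  simp only [mem_Iio] at hax hay hby hbx
  have incomp : ∀ {u v : V}, ¬ u ≤ v → ¬ v ≤ u → G.Adj u v := fun h₁ h₂ => (hG _ _).2 ⟨h₁, h₂⟩
  have comp : ∀ {u v : V}, u < v → ¬ G.Adj u v := fun h hadj => ((hG _ _).1 hadj).1 h.le
  exact hC4 ⟨a, y, x, b, by order, by order, by order, by order, by order, by order,
    incomp (by order) (by order), incomp (by order) (by order), incomp (by order) (by order),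
    incomp (by order) (by order), comp hax, fun h => comp hby h.symm⟩

theorem isIntervalGraph_of_adj_iff_incompRel [Finite V]
    (hG : ∀ u v, G.Adj u v ↔ IncompRel (· ≤ ·) u v) (hC4 : ¬ HasInducedC4 G) :
    IsIntervalGraph G := by
  let L : V → ℝ := fun x => (Iio x).ncard
  have hL : ∀ {x z : V}, Iio x ⊂ Iio z → L x < L z := fun h =>
    Nat.cast_lt.2 (Set.ncard_lt_ncard h)
  let J : V → Set ℝ := fun x => {t | L x ≤ t ∧ ∀ z, x < z → t < L z}
  have left_mem : ∀ x, L x ∈ J x := fun x => ⟨le_rfl, fun z h => hL (Iio_ssubset_Iio h)⟩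
  have mem_of_incomp : ∀ {u v}, IncompRel (· ≤ ·) u v → Iio u ⊆ Iio v → L v ∈ J u := by
    intro u v huv hsub
    refine ⟨Nat.cast_le.2 (Set.ncard_le_ncard hsub), fun z huz => hL ⟨?_, ?_⟩⟩
    · exact (Iio_subset_Iio_total hG hC4 v z).resolve_right fun h => huv.1 (h huz).le
    · exact fun h => huv.1 (h huz).le
  have not_mem_of_lt : ∀ {u v}, u < v → ∀ t ∈ J u, t ∉ J v := fun huv t htu htv =>
    (htu.2 _ huv).not_ge htv.1
  refine ⟨J, fun x => ⟨⟨L x, left_mem x⟩, ⟨?_⟩⟩, fun u v huv => ?_⟩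
  · exact fun s hs t ht r hr => ⟨hs.1.trans hr.1, fun z hz => hr.2.trans_lt (ht.2 z hz)⟩
  rw [hG]
  constructor
  · intro hinc
    rcases Iio_subset_Iio_total hG hC4 u v with h | h
    · exact ⟨L v, mem_of_incomp hinc h, left_mem v⟩
    · exact ⟨L u, left_mem u, mem_of_incomp hinc.symm h⟩
  · rintro ⟨t, htu, htv⟩
    exact ⟨fun h => not_mem_of_lt (lt_of_le_of_ne h huv) t htu htv,
      fun h => not_mem_of_lt (lt_of_le_of_ne h (Ne.symm huv)) t htv htu⟩

end IntervalOrder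

/-- A finite graph is an interval graph iff it has no induced
cycle of length 4 and its complement is a comparability graph. -/
theorem stmt1 {V : Type*} [Fintype V] (G : SimpleGraph V) :
    IsIntervalGraph G ↔ ¬ HasInducedC4 G ∧ IsComparabilityGraph Gᶜ := by
  refine ⟨fun h => ⟨h.not_hasInducedC4, h.isComparabilityGraph_compl⟩, ?_⟩
  rintro ⟨hC4, hcomp⟩
  obtain ⟨_, hG⟩ := hcomp.exists_partialOrder_adj_iff_incompRel
  exact isIntervalGraph_of_adj_iff_incompRel hG hC4
end

section
/- A binary matrix M has the consecutive ones property if and only if the set system S(M) admits an intersection cardinality preserving interval assignment (ICPIA). -/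
/-!
After permuting the columns, each row of a matrix with the consecutive ones property occupies an
interval of positions; positions embed into `ℤ`, so intersection sizes are preserved.

Conversely, classify columns and integer points alike by the set of rows containing them. For a
nonempty set `A` of rows, the columns containing `A` form `⋂_{i ∈ A} S_i` and the points form
`⋂_{i ∈ A} I_i`; these have the same size, because for intervals the size of a triple
intersection is forced by the pairwise ones. Möbius inversion over supersets then matches the
numbers of columns and of points with each exact nonempty pattern, so every column can be sent
to a point with its pattern (a column in no row goes outside all intervals). Sorting the columns
by these points puts the ones of every row consecutively.
-/

open Finset

namespace Finset

variable {α β : Type*} [DecidableEq α]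

theorem Icc_inter_Icc [Lattice β] [LocallyFiniteOrder β] [DecidableEq β] (a₁ b₁ a₂ b₂ : β) :
    Icc a₁ b₁ ∩ Icc a₂ b₂ = Icc (a₁ ⊔ a₂) (b₁ ⊓ b₂) :=
  coe_injective <| by push_cast; exact Set.Icc_inter_Icc

theorem inf'_Icc [Lattice β] [LocallyFiniteOrder β] [DecidableEq β] {ι : Type*} (T : Finset ι)
    (hT : T.Nonempty) (a b : ι → β) :
    T.inf' hT (fun i => Icc (a i) (b i)) = Icc (T.sup' hT a) (T.inf' hT b) := by
  ext x
  simp only [mem_inf', mem_Icc, sup'_le_iff, le_inf'_iff, imp_and, forall_and]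

theorem card_inter_add_card_inter_le (s t u : Finset α) :
    #(s ∩ t) + #(s ∩ u) ≤ #s + #(s ∩ t ∩ u) := by
  have hunion : #((s ∩ t) ∪ (s ∩ u)) ≤ #s :=
    card_le_card (union_subset inter_subset_left inter_subset_left)
  have := card_union_add_card_inter (s ∩ t) (s ∩ u)
  rw [← inter_inter_distrib_left, ← inter_assoc] at this
  omega

theorem inter_inf'_eq_of_mem {ι : Type*} {T : Finset ι} (hT : T.Nonempty) (F : ι → Finset α)
    {x : ι} (hx : x ∈ T) : F x ∩ T.inf' hT F = T.inf' hT F :=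
  inter_eq_right.mpr (inf'_le F hx)

theorem eq_Icc_min'_max' [LinearOrder β] [LocallyFiniteOrder β]
    {s : Finset β} (hs : s.Nonempty) (hconv : (s : Set β).OrdConnected) :
    s = Icc (s.min' hs) (s.max' hs) := by
  ext x
  rw [mem_Icc]
  exact ⟨fun hx => ⟨min'_le s x hx, le_max' s x hx⟩,
    fun hx => hconv.out (min'_mem s hs) (max'_mem s hs) hx⟩

end Finset

theorem Fin.map_valEmbedding_castEmbedding_Icc {n : ℕ} (a b : Fin n) :
    (Icc a b).map (Fin.valEmbedding.trans Nat.castEmbedding) = Icc (a : ℤ) (b : ℤ) := by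
  rw [← map_map, Fin.map_valEmbedding_Icc]
  exact coe_injective (by simpa using Nat.image_cast_int_Icc a b)

theorem Fin.exists_map_eq_Icc_of_ordConnected {n : ℕ} {s : Finset (Fin n)}
    (hconv : (s : Set (Fin n)).OrdConnected) :
    ∃ l u : ℤ, s.map (Fin.valEmbedding.trans Nat.castEmbedding) = Icc l u := by
  rcases s.eq_empty_or_nonempty with rfl | hs
  · exact ⟨1, 0, by simp⟩
  · rw [eq_Icc_min'_max' hs hconv, Fin.map_valEmbedding_castEmbedding_Icc]
    exact ⟨_, _, rfl⟩

theorem isICPIA_of_map_eq_Icc {m n : ℕ} {M : Fin m → Fin n → Bool} {a b : Fin m → ℤ}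
    (e : Fin n ↪ ℤ) (he : ∀ i, (rowFinset M i).map e = Icc (a i) (b i)) : IsICPIA M a b := by
  intro i j
  rw [← he i, ← he j, ← map_inter, card_map]

theorem exists_isICPIA_of_hasCOP {m n : ℕ} {M : Fin m → Fin n → Bool} (hM : HasCOP M) :
    ∃ a b : Fin m → ℤ, IsICPIA M a b := by
  obtain ⟨σ, hσ⟩ := hM
  have hconv : ∀ i, ∃ l u : ℤ, (rowFinset M i).map
      (σ.symm.toEmbedding.trans (Fin.valEmbedding.trans Nat.castEmbedding)) = Icc l u := by
    intro i
    rw [← map_map]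
    refine Fin.exists_map_eq_Icc_of_ordConnected ⟨fun x hx y hy k hk => ?_⟩
    simp only [mem_coe, mem_map_equiv, Equiv.symm_symm, rowFinset, mem_filter, mem_univ,
      true_and] at hx hy ⊢
    exact hσ i x k y hk.1 hk.2 hx hy
  choose a b hab using hconv
  exact ⟨a, b, isICPIA_of_map_eq_Icc _ hab⟩

section IntervalPattern

variable {α ι : Type*} [DecidableEq α]

/-- For finite sets, `#(A ∩ B ∩ C)` lies between `#(A ∩ B) + #(A ∩ C) - #A` (and its two
permutations) and the pairwise intersection sizes; for integer intervals one of these bounds is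
attained. -/
theorem card_inter_inter_eq_of_Icc {A B C : Finset α} {l₁ u₁ l₂ u₂ l₃ u₃ : ℤ}
    (hA : #A = #(Icc l₁ u₁)) (hB : #B = #(Icc l₂ u₂)) (hC : #C = #(Icc l₃ u₃))
    (hAB : #(A ∩ B) = #(Icc l₁ u₁ ∩ Icc l₂ u₂)) (hAC : #(A ∩ C) = #(Icc l₁ u₁ ∩ Icc l₃ u₃))
    (hBC : #(B ∩ C) = #(Icc l₂ u₂ ∩ Icc l₃ u₃)) :
    #(A ∩ B ∩ C) = #(Icc l₁ u₁ ∩ Icc l₂ u₂ ∩ Icc l₃ u₃) := by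
  simp only [Finset.Icc_inter_Icc, Int.card_Icc] at *
  have h₁ : #(A ∩ B ∩ C) ≤ #(A ∩ B) := card_le_card inter_subset_left
  have h₂ : #(A ∩ B ∩ C) ≤ #(A ∩ C) := card_le_card (inter_subset_inter_right inter_subset_left)
  have h₃ : #(A ∩ B ∩ C) ≤ #(B ∩ C) := card_le_card (inter_subset_inter_right inter_subset_right)
  have e₁ := card_inter_add_card_inter_le A B C
  have e₂ := card_inter_add_card_inter_le B A C
  have e₃ := card_inter_add_card_inter_le C A B
  rw [inter_comm B A] at e₂
  rw [inter_comm C A, inter_comm C B, inter_assoc, inter_comm C, ← inter_assoc] at e₃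
  omega

theorem card_inf'_eq_of_card_inter_eq (S : ι → Finset α) (a b : ι → ℤ)
    (h : ∀ i j, #(S i ∩ S j) = #(Icc (a i) (b i) ∩ Icc (a j) (b j)))
    (T : Finset ι) (hT : T.Nonempty) :
    #(T.inf' hT S) = #(T.inf' hT fun i => Icc (a i) (b i)) := by
  have hself : ∀ i, #(S i) = #(Icc (a i) (b i)) := fun i => by simpa using h i i
  have of_forall_inter : ∀ (T : Finset ι) (hT : T.Nonempty),
      (∀ x, #(S x ∩ T.inf' hT S) = #(Icc (a x) (b x) ∩ T.inf' hT fun i => Icc (a i) (b i))) →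
        #(T.inf' hT S) = #(T.inf' hT fun i => Icc (a i) (b i)) := by
    intro T hT key
    obtain ⟨x, hx⟩ := id hT
    have := key x
    rwa [inter_inf'_eq_of_mem hT S hx, inter_inf'_eq_of_mem hT (fun i => Icc (a i) (b i)) hx]
      at this
  refine of_forall_inter T hT ?_
  induction hT using Finset.Nonempty.cons_induction with
  | singleton z => simpa using (h · z)
  | cons z T hzT hT ih =>
    intro x
    have hK := of_forall_inter T hT ih
    rw [inf'_cons hT, inf'_cons hT, inf_eq_inter, inf_eq_inter, ← inter_assoc, ← inter_assoc]
    rw [inf'_Icc] at ih hK ⊢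
    exact card_inter_inter_eq_of_Icc (hself x) (hself z) hK (h x z) (ih x) (ih z)

end IntervalPattern

section Patterns

variable {ι X : Type*} [Fintype ι] [DecidableEq ι]

theorem card_filter_subset_eq_sum (s : Finset X) (pat : X → Finset ι) (A : Finset ι) :
    #{x ∈ s | A ⊆ pat x} = ∑ B with A ⊆ B, #{x ∈ s | pat x = B} := by
  rw [card_eq_sum_card_fiberwise (f := pat) (t := {B | A ⊆ B})
    fun x hx => by simpa using (mem_filter.mp hx).2]
  refine sum_congr rfl fun B hB => congrArg card ?_
  rw [filter_filter]
  exact filter_congr fun x _ => ⟨And.right, fun hx => ⟨hx ▸ (mem_filter.mp hB).2, hx⟩⟩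

theorem eq_of_sum_superset_eq {M : Type*} [AddCancelCommMonoid M] {g h : Finset ι → M}
    (H : ∀ A : Finset ι, A.Nonempty → ∑ B with A ⊆ B, g B = ∑ B with A ⊆ B, h B)
    (A : Finset ι) (hA : A.Nonempty) : g A = h A := by
  revert hA
  refine strongDownwardInductionOn (p := fun A => A.Nonempty → g A = h A) A
    (fun A ih _ hA => ?_) (card_le_univ A)
  have hmem : A ∈ ({B | A ⊆ B} : Finset (Finset ι)) := by simp
  have hrest : ∑ B ∈ ({B | A ⊆ B} : Finset (Finset ι)).erase A, g B =
      ∑ B ∈ ({B | A ⊆ B} : Finset (Finset ι)).erase A, h B := by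
    refine sum_congr rfl fun B hB => ?_
    obtain ⟨hBA, hAB⟩ := by simpa using hB
    exact ih (card_le_univ B) (ssubset_of_subset_of_ne hAB (Ne.symm hBA))
      (hA.mono hAB)
  have := H A hA
  rw [← add_sum_erase _ _ hmem, ← add_sum_erase _ _ hmem, hrest] at this
  exact add_right_cancel this

end Patterns

theorem exists_mem_Icc_iff_of_isICPIA {m n : ℕ} {M : Fin m → Fin n → Bool} {a b : Fin m → ℤ}
    (hM : IsICPIA M a b) :
    ∃ f : Fin n → ℤ, ∀ i j, M i j = true ↔ f j ∈ Set.Icc (a i) (b i) := by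
  classical
  set colPat : Fin n → Finset (Fin m) := fun j => {i | M i j = true}
  set ptPat : ℤ → Finset (Fin m) := fun p => {i | p ∈ Icc (a i) (b i)}
  set P : Finset ℤ := univ.biUnion fun i => Icc (a i) (b i)
  have hcount : ∀ A : Finset (Fin m), A.Nonempty →
      #{j | colPat j = A} = #{p ∈ P | ptPat p = A} := by
    refine eq_of_sum_superset_eq fun A hA => ?_
    rw [← card_filter_subset_eq_sum, ← card_filter_subset_eq_sum]
    have hcol : ({j | A ⊆ colPat j} : Finset (Fin n)) = A.inf' hA (rowFinset M) := by
      ext j; simp [colPat, rowFinset, subset_iff]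
    have hpt : ({p ∈ P | A ⊆ ptPat p} : Finset ℤ) = A.inf' hA fun i => Icc (a i) (b i) := by
      ext p
      simp only [mem_filter, mem_inf', P, ptPat, mem_biUnion, mem_univ, true_and, subset_iff]
      obtain ⟨i, hi⟩ := hA
      exact ⟨And.right, fun h => ⟨⟨i, h hi⟩, h⟩⟩
    rw [hcol, hpt]
    exact card_inf'_eq_of_card_inter_eq _ a b hM A hA
  have hreal : ∀ j, ∃ p, ptPat p = colPat j := by
    intro j
    rcases (colPat j).eq_empty_or_nonempty with hj | hj
    · obtain ⟨p, hp⟩ := Infinite.exists_notMem_finset P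
      refine ⟨p, hj ▸ ?_⟩
      ext i
      simpa [ptPat, P] using fun h => hp (mem_biUnion.mpr ⟨i, mem_univ i, mem_Icc.mpr h⟩)
    · have hpos : 0 < #{p ∈ P | ptPat p = colPat j} := by
        rw [← hcount _ hj]
        exact card_pos.mpr ⟨j, by simp⟩
      obtain ⟨p, hp⟩ := card_pos.mp hpos
      exact ⟨p, (mem_filter.mp hp).2⟩
  choose f hf using hreal
  refine ⟨f, fun i j => ?_⟩
  have := congrArg (i ∈ ·) (hf j)
  simpa [colPat, ptPat] using this.symm

theorem hasCOP_of_iff_mem_ordConnected {R α : Type*} [LinearOrder α] {n : ℕ}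
    {M : R → Fin n → Bool} (f : Fin n → α) (I : R → Set α) (hI : ∀ i, (I i).OrdConnected)
    (hM : ∀ i j, M i j = true ↔ f j ∈ I i) : HasCOP M := by
  refine ⟨Tuple.sort f, fun i u v w huv hvw hu hw => ?_⟩
  rw [hM] at hu hw ⊢
  exact (hI i).out hu hw ⟨Tuple.monotone_sort f huv, Tuple.monotone_sort f hvw⟩

/-- A binary matrix has the consecutive ones property iff its
set system admits an ICPIA. -/
theorem stmt2 {m n : ℕ} (M : Fin m → Fin n → Bool) :
    HasCOP M ↔ ∃ a b : Fin m → ℤ, IsICPIA M a b := by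
  refine ⟨exists_isICPIA_of_hasCOP, fun ⟨a, b, hM⟩ => ?_⟩
  obtain ⟨f, hf⟩ := exists_mem_Icc_iff_of_isICPIA hM
  exact hasCOP_of_iff_mem_ordConnected f _ (fun _ => Set.ordConnected_Icc) hf
end

section
/- Let M be a binary matrix and let S_1, S_2, S_3 be three pairwise intersecting sets of its set system S(M), corresponding to rows r_1, r_2, r_3, such that either S_1 ∩ S_2 ∩ S_3 = ∅, or none of S_1, S_2, S_3 is contained in the union of the other two. Then every set D of rows of M for which M \ D has the consecutive ones property contains at least one of r_1, r_2, r_3. -/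
/-!
Under a column order witnessing COP every row becomes an interval of `Fin n`. Three pairwise
intersecting intervals of a linear order have a common point `w` (Helly's theorem on the line:
the median of three pairwise witnesses works). If each of them also had a point `xᵢ` outside the
other two, then `w` would lie between every two of the `xᵢ`, forcing `w` to be one of them,
which is absurd since `w` lies in all three intervals.
-/

open Set
open scoped Interval

section LinearOrder

variable {α : Type*} [LinearOrder α]

theorem exists_mem_uIcc_inter_uIcc_inter_uIcc (p q r : α) :
    ∃ w, w ∈ [[p, q]] ∧ w ∈ [[p, r]] ∧ w ∈ [[q, r]] := by
  refine ⟨max (min p q) (min (max p q) r), ?_⟩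
  simp only [mem_uIcc]
  grind

theorem eq_or_eq_or_eq_of_mem_uIcc {x y z w : α} (hxy : w ∈ [[x, y]]) (hxz : w ∈ [[x, z]])
    (hyz : w ∈ [[y, z]]) : w = x ∨ w = y ∨ w = z := by
  simp only [mem_uIcc] at hxy hxz hyz
  grind

theorem mem_uIcc_or_mem_uIcc_or_mem_uIcc (x y w : α) :
    x ∈ [[y, w]] ∨ y ∈ [[x, w]] ∨ w ∈ [[x, y]] := by
  simp only [mem_uIcc]
  grind

namespace Set.OrdConnected

variable {S T U : Set α}

theorem inter_inter_nonempty (hS : S.OrdConnected) (hT : T.OrdConnected) (hU : U.OrdConnected)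
    (hST : (S ∩ T).Nonempty) (hSU : (S ∩ U).Nonempty) (hTU : (T ∩ U).Nonempty) :
    (S ∩ T ∩ U).Nonempty := by
  obtain ⟨p, hpS, hpT⟩ := hST
  obtain ⟨q, hqS, hqU⟩ := hSU
  obtain ⟨r, hrT, hrU⟩ := hTU
  obtain ⟨w, hpq, hpr, hqr⟩ := exists_mem_uIcc_inter_uIcc_inter_uIcc p q r
  exact ⟨w, ⟨hS.uIcc_subset hpS hqS hpq, hT.uIcc_subset hpT hrT hpr⟩, hU.uIcc_subset hqU hrU hqr⟩

theorem mem_uIcc_of_mem_diff (hS : S.OrdConnected) (hT : T.OrdConnected) {w x y : α}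
    (hw : w ∈ S ∩ T) (hx : x ∈ S \ T) (hy : y ∈ T \ S) : w ∈ [[x, y]] := by
  rcases mem_uIcc_or_mem_uIcc_or_mem_uIcc x y w with h | h | h
  · exact absurd (hT.uIcc_subset hy.1 hw.2 h) hx.2
  · exact absurd (hS.uIcc_subset hx.1 hw.1 h) hy.2
  · exact h

theorem subset_union_of_inter_inter_nonempty (hS : S.OrdConnected) (hT : T.OrdConnected)
    (hU : U.OrdConnected) (hSTU : (S ∩ T ∩ U).Nonempty) :
    S ⊆ T ∪ U ∨ T ⊆ S ∪ U ∨ U ⊆ S ∪ T := by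
  obtain ⟨w, ⟨hwS, hwT⟩, hwU⟩ := hSTU
  by_contra h
  simp only [not_or, not_subset, mem_union] at h
  obtain ⟨⟨x, hxS, hxTU⟩, ⟨y, hyT, hySU⟩, ⟨z, hzU, hzST⟩⟩ := h
  have hxy := hS.mem_uIcc_of_mem_diff hT ⟨hwS, hwT⟩ ⟨hxS, hxTU.1⟩ ⟨hyT, hySU.1⟩
  have hxz := hS.mem_uIcc_of_mem_diff hU ⟨hwS, hwU⟩ ⟨hxS, hxTU.2⟩ ⟨hzU, hzST.1⟩
  have hyz := hT.mem_uIcc_of_mem_diff hU ⟨hwT, hwU⟩ ⟨hyT, hySU.2⟩ ⟨hzU, hzST.2⟩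
  rcases eq_or_eq_or_eq_of_mem_uIcc hxy hxz hyz with rfl | rfl | rfl
  exacts [hxTU.1 hwT, hySU.1 hwS, hzST.1 hwS]

end Set.OrdConnected

end LinearOrder

section COP

variable {R : Type*} {n : ℕ} {M : R → Fin n → Bool}

theorem HasCOP.exists_ordConnected_preimage_rowSet (hM : HasCOP M) :
    ∃ σ : Equiv.Perm (Fin n), ∀ i, (σ ⁻¹' rowSet M i).OrdConnected := by
  obtain ⟨σ, hσ⟩ := hM
  exact ⟨σ, fun i => ⟨fun a ha c hc b hb => hσ i a b c hb.1 hb.2 ha hc⟩⟩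

theorem HasCOP.rowSet_inter_inter_nonempty (hM : HasCOP M) {i j k : R}
    (hij : (rowSet M i ∩ rowSet M j).Nonempty) (hik : (rowSet M i ∩ rowSet M k).Nonempty)
    (hjk : (rowSet M j ∩ rowSet M k).Nonempty) :
    (rowSet M i ∩ rowSet M j ∩ rowSet M k).Nonempty := by
  obtain ⟨σ, hσ⟩ := hM.exists_ordConnected_preimage_rowSet
  obtain ⟨w, hw⟩ := (hσ i).inter_inter_nonempty (hσ j) (hσ k) (hij.preimage σ.surjective)
    (hik.preimage σ.surjective) (hjk.preimage σ.surjective)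
  exact ⟨σ w, hw⟩

theorem HasCOP.rowSet_subset_union (hM : HasCOP M) {i j k : R}
    (hijk : (rowSet M i ∩ rowSet M j ∩ rowSet M k).Nonempty) :
    rowSet M i ⊆ rowSet M j ∪ rowSet M k ∨ rowSet M j ⊆ rowSet M i ∪ rowSet M k ∨
      rowSet M k ⊆ rowSet M i ∪ rowSet M j := by
  obtain ⟨σ, hσ⟩ := hM.exists_ordConnected_preimage_rowSet
  simpa only [← preimage_union, σ.surjective.preimage_subset_preimage_iff] using
    (hσ i).subset_union_of_inter_inter_nonempty (hσ j) (hσ k) (hijk.preimage σ.surjective)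

end COP

theorem stmt11_general {m n : ℕ} (M : Fin m → Fin n → Bool) (r1 r2 r3 : Fin m)
    (hi12 : (rowSet M r1 ∩ rowSet M r2).Nonempty)
    (hi13 : (rowSet M r1 ∩ rowSet M r3).Nonempty)
    (hi23 : (rowSet M r2 ∩ rowSet M r3).Nonempty)
    (hviol : rowSet M r1 ∩ rowSet M r2 ∩ rowSet M r3 = ∅ ∨
      (¬ rowSet M r1 ⊆ rowSet M r2 ∪ rowSet M r3 ∧
       ¬ rowSet M r2 ⊆ rowSet M r1 ∪ rowSet M r3 ∧
       ¬ rowSet M r3 ⊆ rowSet M r1 ∪ rowSet M r2))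
    (D : Set (Fin m)) (hD : HasCOP (delRows M D)) :
    r1 ∈ D ∨ r2 ∈ D ∨ r3 ∈ D := by
  by_contra! hr
  obtain ⟨hr1, hr2, hr3⟩ := hr
  have hcommon : (rowSet M r1 ∩ rowSet M r2 ∩ rowSet M r3).Nonempty :=
    hD.rowSet_inter_inter_nonempty (i := ⟨r1, hr1⟩) (j := ⟨r2, hr2⟩) (k := ⟨r3, hr3⟩)
      hi12 hi13 hi23
  rcases hviol with hempty | ⟨hn1, hn2, hn3⟩
  · exact hcommon.ne_empty hempty
  · rcases hD.rowSet_subset_union (i := ⟨r1, hr1⟩) (j := ⟨r2, hr2⟩) (k := ⟨r3, hr3⟩) hcommon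
      with h | h | h
    exacts [hn1 h, hn2 h, hn3 h]

/-- Branching rule 1: If three pairwise intersecting row sets
`S_1, S_2, S_3` of `M` either have empty common intersection, or none of them
is contained in the union of the other two, then every row-deletion set `D`
giving COP contains one of the three rows. -/
theorem stmt11 {m n : ℕ} (M : Fin m → Fin n → Bool) (r1 r2 r3 : Fin m)
    (h12 : r1 ≠ r2) (h13 : r1 ≠ r3) (h23 : r2 ≠ r3)
    (hi12 : (rowSet M r1 ∩ rowSet M r2).Nonempty)
    (hi13 : (rowSet M r1 ∩ rowSet M r3).Nonempty)
    (hi23 : (rowSet M r2 ∩ rowSet M r3).Nonempty)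
    (hviol : rowSet M r1 ∩ rowSet M r2 ∩ rowSet M r3 = ∅ ∨
      (¬ rowSet M r1 ⊆ rowSet M r2 ∪ rowSet M r3 ∧
       ¬ rowSet M r2 ⊆ rowSet M r1 ∪ rowSet M r3 ∧
       ¬ rowSet M r3 ⊆ rowSet M r1 ∪ rowSet M r2))
    (D : Set (Fin m)) (hD : HasCOP (delRows M D)) :
    r1 ∈ D ∨ r2 ∈ D ∨ r3 ∈ D :=
  stmt11_general M r1 r2 r3 hi12 hi13 hi23 hviol D hD
end

section
/- Let M be a binary matrix such that for every three pairwise intersecting sets S_a, S_b, S_c in S(M), both S_a ∩ S_b ∩ S_c ≠ ∅ and one of the three sets is contained in the union of the other two. Let Q be a maximal clique of the derived graph G(M) such that no column c_l satisfies vert(c_l) = Q, and let Q' be a subset of Q that is minimal with the property that no column c of M satisfies Q' ⊆ vert(c). Let v_1, v_2, v_3 be any three distinct vertices in Q', with corresponding rows r_1, r_2, r_3. Then every set D of rows of M for which M \ D has the consecutive ones property contains at least one of r_1, r_2, r_3. -/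
/-! Each proper subset of `Q'` lies in some `vert(c)` while `Q'` itself does not, so for each
`vᵢ` there is a column `kᵢ` containing every vertex of `Q'` except `vᵢ`. In any column order one of
`k₁, k₂, k₃` lies between the other two; the row `vⱼ` of that middle column `kⱼ` then has ones at
the outer two columns and a zero in between, so it cannot survive in a matrix with the
consecutive ones property. -/

theorem HasCOP.exists_column_between {R : Type*} {n : ℕ} {M : R → Fin n → Bool}
    (hM : HasCOP M) (k : Fin 3 → Fin n) :
    ∃ j, ∀ i, (∀ l, l ≠ j → M i (k l) = true) → M i (k j) = true := by
  obtain ⟨σ, hσ⟩ := hM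
  set τ := Tuple.sort (σ.symm ∘ k)
  have hmono := Tuple.monotone_sort (σ.symm ∘ k)
  refine ⟨τ 1, fun i hi => ?_⟩
  simpa using hσ i _ _ _ (hmono (by decide : (0 : Fin 3) ≤ 1)) (hmono (by decide : (1 : Fin 3) ≤ 2))
    (by simpa using hi (τ 0) (τ.injective.ne (by decide)))
    (by simpa using hi (τ 2) (τ.injective.ne (by decide)))

theorem exists_column_iff_ne_of_minimal_uncovered {R : Type*} {n : ℕ} {M : R → Fin n → Bool}
    {Q' : Set R} (hQ' : ¬ ∃ k, Q' ⊆ vert M k) (hmin : ∀ Q'' ⊂ Q', ∃ k, Q'' ⊆ vert M k)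
    {v : R} (hv : v ∈ Q') : ∃ k, ∀ w ∈ Q', M w k = true ↔ w ≠ v := by
  obtain ⟨k, hk⟩ := hmin (Q' \ {v}) (Set.sdiff_singleton_ssubset.mpr hv)
  refine ⟨k, fun w hw => ⟨fun hwk hwv => hQ' ⟨k, fun x hx => ?_⟩, fun hwv => hk ⟨hw, hwv⟩⟩⟩
  by_cases hxv : x = v
  · subst hxv hwv
    exact hwk
  · exact hk ⟨hx, hxv⟩

theorem stmt17_general {m n : ℕ} (M : Fin m → Fin n → Bool)
    (Q' : Set (Fin m))
    (hQ'prop : ¬ ∃ k : Fin n, Q' ⊆ vert M k)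
    (hQ'min : ∀ Q'' : Set (Fin m), Q'' ⊂ Q' → ∃ k : Fin n, Q'' ⊆ vert M k)
    (v1 v2 v3 : Fin m) (h1 : v1 ∈ Q') (h2 : v2 ∈ Q') (h3 : v3 ∈ Q')
    (h12 : v1 ≠ v2) (h13 : v1 ≠ v3) (h23 : v2 ≠ v3)
    (D : Set (Fin m)) (hD : HasCOP (delRows M D)) :
    v1 ∈ D ∨ v2 ∈ D ∨ v3 ∈ D := by
  by_contra! hvD
  set r : Fin 3 → Fin m := ![v1, v2, v3]
  have hrQ' : ∀ i, r i ∈ Q' := by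
    intro i; fin_cases i <;> assumption
  have hrD : ∀ i, r i ∉ D := by
    intro i; fin_cases i <;> simp [r, hvD]
  have hr : Function.Injective r := by
    intro i j; fin_cases i <;> fin_cases j <;> simp [r, h12, h13, h23, h12.symm, h13.symm, h23.symm]
  choose k hk using fun i => exists_column_iff_ne_of_minimal_uncovered hQ'prop hQ'min (hrQ' i)
  obtain ⟨j, hj⟩ := hD.exists_column_between k
  have hjj := hj ⟨r j, hrD j⟩ fun l hl => (hk l (r j) (hrQ' j)).mpr (hr.ne hl.symm)
  exact (hk j (r j) (hrQ' j)).mp hjj rfl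

/-- Branching rule 3: Under the triple condition, if `Q` is a
maximal clique of `G(M)` equal to no `vert(c_l)`, and `Q'` is a subset of `Q`
minimal with the property of being contained in no `vert(c)`, then for any
three distinct vertices of `Q'`, every row-deletion set `D` giving COP
contains one of the three corresponding rows. -/
theorem stmt17 {m n : ℕ} (M : Fin m → Fin n → Bool)
    (hH : ∀ ra rb rc : Fin m,
      (rowSet M ra ∩ rowSet M rb).Nonempty →
      (rowSet M ra ∩ rowSet M rc).Nonempty →
      (rowSet M rb ∩ rowSet M rc).Nonempty →
      (rowSet M ra ∩ rowSet M rb ∩ rowSet M rc).Nonempty ∧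
      (rowSet M ra ⊆ rowSet M rb ∪ rowSet M rc ∨
       rowSet M rb ⊆ rowSet M ra ∪ rowSet M rc ∨
       rowSet M rc ⊆ rowSet M ra ∪ rowSet M rb))
    (Q : Set (Fin m)) (hQ : IsMaximalClique (derivedGraph M) Q)
    (hnocol : ¬ ∃ k : Fin n, vert M k = Q)
    (Q' : Set (Fin m)) (hQ'sub : Q' ⊆ Q)
    (hQ'prop : ¬ ∃ k : Fin n, Q' ⊆ vert M k)
    (hQ'min : ∀ Q'' : Set (Fin m), Q'' ⊂ Q' → ∃ k : Fin n, Q'' ⊆ vert M k)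
    (v1 v2 v3 : Fin m) (h1 : v1 ∈ Q') (h2 : v2 ∈ Q') (h3 : v3 ∈ Q')
    (h12 : v1 ≠ v2) (h13 : v1 ≠ v3) (h23 : v2 ≠ v3)
    (D : Set (Fin m)) (hD : HasCOP (delRows M D)) :
    v1 ∈ D ∨ v2 ∈ D ∨ v3 ∈ D :=
  stmt17_general M Q' hQ'prop hQ'min v1 v2 v3 h1 h2 h3 h12 h13 h23 D hD
end
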